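/- Define g'(z) = (4/z³) log(z+√(z²−4)) + √(z²−4)/z² − (4/z³) log 2 − (2πi)/z³ for z in the upper half-plane (principal branches). Then for x ∈ (−2, 2), the boundary value from above satisfies g'₊(x) = −πi ψ(x), where ψ is the equilibrium density. -/

import Mathlib

open Real Filter Topology Complex

/-- The branch of `√(z²−4)` analytic off `[−2,2]` that behaves like `z` at infinity,
written as `(z−2)^{1/2}(z+2)^{1/2}` with principal branches. -/
noncomputable def sqrtZsqSub4 (z : ℂ) : ℂ :=
  (z - 2) ^ ((1 : ℂ) / 2) * (z + 2) ^ ((1 : ℂ) / 2)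

/-- `g'(z) = (4/z³) log(z+√(z²−4)) + √(z²−4)/z² − (4/z³) log 2 − (2πi)/z³`
for `z` in the upper half-plane (principal branches). -/
noncomputable def gPrime (z : ℂ) : ℂ :=
  4 / z ^ 3 * Complex.log (z + sqrtZsqSub4 z) + sqrtZsqSub4 z / z ^ 2
    - 4 / z ^ 3 * (Real.log 2 : ℂ) - 2 * (π : ℂ) * Complex.I / z ^ 3

/-- The equilibrium density on the band: for `0 < |x| < 2`,
`ψ(x) = (1/π)(4 arctan(|x|/√(4-x²))/|x|³ − √(4-x²)/x²)`. -/
noncomputable def psiBand (x : ℝ) : ℝ :=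
  (1 / π) * (4 * Real.arctan (|x| / Real.sqrt (4 - x ^ 2)) / |x| ^ 3
    - Real.sqrt (4 - x ^ 2) / x ^ 2)
/-!
Since `(z - 2)^{1/2}` is continuous from the closed upper half-plane at the cut `z - 2 < 0`
(there `arg = π`, so it takes the value `i√(2 - x)`), the function `g'` extends continuously
from above to `x ∈ (-2, 2)` and its boundary value is the formula evaluated at `x`.
At `x`, `x + √(4 - x²) i` lies on the circle of radius 2 with argument
`arccos (x/2) = π/2 - arctan (x/√(4 - x²))`, and the `π/2` cancels the `2πi/z³` term.
-/

open Set

lemma continuousWithinAt_cpow_const_of_re_neg_of_im_zero {a : ℂ} (hre : a.re < 0)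
    (him : a.im = 0) (c : ℂ) : ContinuousWithinAt (· ^ c) {z : ℂ | 0 ≤ z.im} a := by
  have ha : a ≠ 0 := fun h => hre.ne (by simp [h])
  have hexp : ContinuousWithinAt (fun z => exp (Complex.log z * c)) {z : ℂ | 0 ≤ z.im} a :=
    continuous_exp.continuousAt.comp_continuousWithinAt
      ((continuousWithinAt_log_of_re_neg_of_im_zero hre him).mul continuousWithinAt_const)
  refine hexp.congr_of_eventuallyEq ?_ (cpow_def_of_ne_zero ha c)
  filter_upwards [eventually_nhdsWithin_of_eventually_nhds (eventually_ne_nhds ha)] with z hz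
  exact cpow_def_of_ne_zero hz c

lemma ofReal_cpow_one_half {r : ℝ} (hr : 0 ≤ r) : (r : ℂ) ^ ((1 : ℂ) / 2) = √r := by
  rw [sqrt_eq_rpow, ofReal_cpow hr]
  push_cast
  ring_nf

lemma ofReal_cpow_one_half_of_nonpos {r : ℝ} (hr : r ≤ 0) :
    (r : ℂ) ^ ((1 : ℂ) / 2) = √(-r) * I := by
  rw [ofReal_cpow_of_nonpos hr, ← ofReal_neg, ofReal_cpow_one_half (neg_nonneg.2 hr),
    show (π : ℂ) * I * (1 / 2) = π / 2 * I by ring, exp_pi_div_two_mul_I]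

lemma sqrtZsqSub4_ofReal {x : ℝ} (hx : x ∈ Ioo (-2 : ℝ) 2) :
    sqrtZsqSub4 x = √(4 - x ^ 2) * I := by
  obtain ⟨hx₁, hx₂⟩ := hx
  rw [sqrtZsqSub4, show (x : ℂ) - 2 = ((x - 2 : ℝ) : ℂ) by push_cast; ring,
    show (x : ℂ) + 2 = ((x + 2 : ℝ) : ℂ) by push_cast; ring,
    ofReal_cpow_one_half_of_nonpos (by linarith), ofReal_cpow_one_half (by linarith),
    show 4 - x ^ 2 = -(x - 2) * (x + 2) by ring, sqrt_mul (by linarith)]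
  push_cast
  ring

lemma continuousWithinAt_sqrtZsqSub4 {x : ℝ} (hx : x ∈ Ioo (-2 : ℝ) 2) :
    ContinuousWithinAt sqrtZsqSub4 {z : ℂ | 0 ≤ z.im} x := by
  have hsub : ContinuousWithinAt (fun z : ℂ => (z - 2) ^ ((1 : ℂ) / 2)) {z : ℂ | 0 ≤ z.im} x :=
    (continuousWithinAt_cpow_const_of_re_neg_of_im_zero (by simp; linarith [hx.2]) (by simp)
      _).comp (continuousWithinAt_id.sub continuousWithinAt_const) fun z hz => by simpa using hz
  have hadd : ContinuousWithinAt (fun z : ℂ => (z + 2) ^ ((1 : ℂ) / 2)) {z : ℂ | 0 ≤ z.im} x :=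
    (continuousAt_cpow_const (mem_slitPlane_iff.2 (Or.inl (by simp; linarith [hx.1])))
      ).comp_continuousWithinAt (continuousWithinAt_id.add continuousWithinAt_const)
  exact hsub.mul hadd

lemma log_add_sqrt_mul_I {r x : ℝ} (hr : 0 < r) (hx : x ∈ Icc (-r) r) :
    Complex.log (x + √(r ^ 2 - x ^ 2) * I) = Real.log r + Real.arccos (x / r) * I := by
  have hnorm : ‖(x + √(r ^ 2 - x ^ 2) * I : ℂ)‖ = r := by
    rw [norm_add_mul_I, sq_sqrt (by nlinarith [hx.1, hx.2]), add_sub_cancel, sqrt_sq hr.le]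
  have hne : (x + √(r ^ 2 - x ^ 2) * I : ℂ) ≠ 0 := by
    rw [← norm_ne_zero_iff, hnorm]; exact hr.ne'
  rw [Complex.log, hnorm, arg_of_im_nonneg_of_ne_zero (by simp [sqrt_nonneg]) hne, hnorm]
  simp

lemma arccos_div_eq_pi_div_two_sub_arctan {r x : ℝ} (hr : 0 < r) (hx : x ∈ Ioo (-r) r) :
    Real.arccos (x / r) = π / 2 - Real.arctan (x / √(r ^ 2 - x ^ 2)) := by
  have hxr : x / r ∈ Ioo (-1 : ℝ) 1 := by
    constructor
    · rw [lt_div_iff₀ hr]; linarith [hx.1]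
    · rw [div_lt_iff₀ hr]; linarith [hx.2]
  rw [arccos_eq_pi_div_two_sub_arcsin, arcsin_eq_arctan hxr, div_pow,
    show 1 - x ^ 2 / r ^ 2 = (r ^ 2 - x ^ 2) / r ^ 2 by field_simp,
    sqrt_div' _ (sq_nonneg r), sqrt_sq hr.le, div_div_div_cancel_right₀ hr.ne']

lemma arctan_abs_div_div_abs_pow_three (x s : ℝ) :
    Real.arctan (|x| / s) / |x| ^ 3 = Real.arctan (x / s) / x ^ 3 := by
  rcases abs_cases x with ⟨h, -⟩ | ⟨h, -⟩
  · rw [h]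
  · rw [h, neg_div, Real.arctan_neg, neg_pow, Odd.neg_one_pow (by decide)]
    ring

lemma gPrime_ofReal {x : ℝ} (hx : x ∈ Ioo (-2 : ℝ) 2) :
    gPrime x = -(π : ℂ) * I * (psiBand x : ℂ) := by
  rw [gPrime, sqrtZsqSub4_ofReal hx, psiBand, mul_div_assoc (4 : ℝ),
    arctan_abs_div_div_abs_pow_three, show (4 : ℝ) - x ^ 2 = 2 ^ 2 - x ^ 2 by norm_num,
    log_add_sqrt_mul_I two_pos (Ioo_subset_Icc_self hx),
    arccos_div_eq_pi_div_two_sub_arctan two_pos hx]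
  push_cast
  field_simp
  ring

lemma continuousWithinAt_gPrime {x : ℝ} (hx : x ∈ Ioo (-2 : ℝ) 2) (hx0 : x ≠ 0) :
    ContinuousWithinAt gPrime {z : ℂ | 0 ≤ z.im} x := by
  have hx0' : (x : ℂ) ≠ 0 := ofReal_ne_zero.2 hx0
  have hz : ContinuousWithinAt (fun z : ℂ => z) {z : ℂ | 0 ≤ z.im} x := continuousWithinAt_id
  have hsqrt := continuousWithinAt_sqrtZsqSub4 hx
  have hlog : ContinuousWithinAt (fun z => Complex.log (z + sqrtZsqSub4 z))
      {z : ℂ | 0 ≤ z.im} x := by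
    refine (hz.add hsqrt).clog (mem_slitPlane_iff.2 (Or.inr ?_))
    have : 0 < 4 - x ^ 2 := by nlinarith [hx.1, hx.2]
    simp [sqrtZsqSub4_ofReal hx, (sqrt_pos.2 this).ne']
  have hcube : ContinuousWithinAt (fun z : ℂ => 4 / z ^ 3) {z : ℂ | 0 ≤ z.im} x :=
    continuousWithinAt_const.div (hz.pow 3) (pow_ne_zero 3 hx0')
  exact (((hcube.mul hlog).add (hsqrt.div (hz.pow 2) (pow_ne_zero 2 hx0'))).sub
    (hcube.mul continuousWithinAt_const)).sub
    (continuousWithinAt_const.div (hz.pow 3) (pow_ne_zero 3 hx0'))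

lemma tendsto_ofReal_add_mul_I_nhdsWithin_im_nonneg (x : ℝ) :
    Tendsto (fun ε : ℝ => (x : ℂ) + ε * I) (𝓝[>] 0) (𝓝[{z : ℂ | 0 ≤ z.im}] x) := by
  refine tendsto_nhdsWithin_iff.2 ⟨?_, ?_⟩
  · have : Continuous fun ε : ℝ => (x : ℂ) + ε * I := by fun_prop
    simpa using (this.tendsto 0).mono_left nhdsWithin_le_nhds
  · filter_upwards [self_mem_nhdsWithin] with ε (hε : 0 < ε)
    simpa using hε.le

/-- For `x ∈ (−2, 2)`, `x ≠ 0`, the boundary value of `g'` from the upper half-plane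
satisfies `g'₊(x) = −πi ψ(x)`. -/
theorem gPrime_boundary_value (x : ℝ) (hx : x ∈ Set.Ioo (-2 : ℝ) 2) (hx0 : x ≠ 0) :
    Tendsto (fun ε : ℝ => gPrime ((x : ℂ) + (ε : ℂ) * Complex.I)) (𝓝[>] 0)
      (𝓝 (-(π : ℂ) * Complex.I * (psiBand x : ℂ))) := by
  rw [← gPrime_ofReal hx]
  exact (continuousWithinAt_gPrime hx hx0).tendsto.comp
    (tendsto_ofReal_add_mul_I_nhdsWithin_im_nonneg x)
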